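/- Let X have density p on ℝ^d and Y = X + N with N ~ N(0, σ²I) independent of X. Then the Hessian of the log smoothed density satisfies ∇² log p_Y(y) = −(1/σ²)I + (1/σ⁴)·cov(X | Y = y). -/

import Mathlib

open MeasureTheory Real

noncomputable section

def sqDist {d : ℕ} (x y : Fin d → ℝ) : ℝ := ∑ i, (x i - y i) ^ 2

/-- Density of the isotropic Gaussian `N(x, σ² I)` evaluated at `y`. -/
def gKer (d : ℕ) (σ : ℝ) (x y : Fin d → ℝ) : ℝ :=
  (2 * π * σ ^ 2) ^ (-(d : ℝ) / 2) * Real.exp (-sqDist x y / (2 * σ ^ 2))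

/-- Hessian matrix of `g` at `y`. -/
def hess' {d : ℕ} (g : (Fin d → ℝ) → ℝ) (y : Fin d → ℝ) : Matrix (Fin d) (Fin d) ℝ :=
  Matrix.of fun i j => fderiv ℝ (fun z => fderiv ℝ g z (Pi.single j 1)) y (Pi.single i 1)

/-- Posterior covariance of `X` given the noisy observation `y`. -/
def postCov (d : ℕ) (σ : ℝ) (p : (Fin d → ℝ) → ℝ) (y : Fin d → ℝ) :
    Matrix (Fin d) (Fin d) ℝ :=
  Matrix.of fun i j =>
    (∫ x, x i * x j * (p x * gKer d σ x y)) / (∫ x, p x * gKer d σ x y)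
      - ((∫ x, x i * (p x * gKer d σ x y)) / (∫ x, p x * gKer d σ x y))
          * ((∫ x, x j * (p x * gKer d σ x y)) / (∫ x, p x * gKer d σ x y))

/-!
Differentiation under the integral sign is justified by domination: for `z` in a bounded set,
`(1 + ‖x‖)² · gKer d σ x z` is bounded uniformly in `x` (as `t² e^{-t²/2σ²} ≤ 2σ²`), so the integrands
with weights `1, x_j, x_i x_j`, and the `z`-derivatives of the first two, are dominated by a multiple
of `|p|`. This gives `∇ p_Y(y) = σ⁻² ∫ (x - y) p(x) gKer d σ x y dx`, and dividing by `p_Y(y)` gives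
Tweedie's formula `∇ log p_Y(y) = (E[X | Y = y] - y) / σ²`. Differentiating the posterior mean
`E[X | Y = y]` once more by the quotient rule gives
`σ⁻⁴ (E[X Xᵀ | Y = y] - E[X | Y = y] E[X | Y = y]ᵀ) - σ⁻² I`.
-/

def dotProductCLM {d : ℕ} (u : Fin d → ℝ) : (Fin d → ℝ) →L[ℝ] ℝ :=
  ∑ k, u k • ContinuousLinearMap.proj k

@[simp]
lemma dotProductCLM_apply {d : ℕ} (u v : Fin d → ℝ) : dotProductCLM u v = ∑ k, u k * v k := by
  simp [dotProductCLM]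

lemma dotProductCLM_single {d : ℕ} (u : Fin d → ℝ) (i : Fin d) :
    dotProductCLM u (Pi.single i 1) = u i := by
  simp [Pi.single_apply]

lemma norm_dotProductCLM_le {d : ℕ} (u : Fin d → ℝ) : ‖dotProductCLM u‖ ≤ d * ‖u‖ := by
  refine ContinuousLinearMap.opNorm_le_bound _ (by positivity) fun v => ?_
  rw [dotProductCLM_apply]
  calc ‖∑ k, u k * v k‖ ≤ ∑ k, ‖u k * v k‖ := norm_sum_le _ _
    _ ≤ ∑ _k : Fin d, ‖u‖ * ‖v‖ := by
        gcongr with k; rw [norm_mul]; gcongr <;> exact norm_le_pi_norm _ k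
    _ = d * ‖u‖ * ‖v‖ := by simp [mul_assoc]

@[fun_prop]
lemma continuous_dotProductCLM {d : ℕ} : Continuous (dotProductCLM (d := d)) := by
  unfold dotProductCLM; fun_prop

open Filter Topology in
theorem hasFDerivAt_integral_mul_of_fderiv_le {α E : Type*} [MeasurableSpace α] {μ : Measure α}
    [NormedAddCommGroup E] [NormedSpace ℝ E] {p : α → ℝ} (hp : Integrable p μ)
    {φ : E → α → ℝ} {φ' : E → α → E →L[ℝ] ℝ} {y : E} {s : Set E} (hs : s ∈ 𝓝 y) {C : ℝ}
    (hφ_meas : ∀ z ∈ s, AEStronglyMeasurable (φ z) μ) (hφ_int : Integrable (fun x => p x * φ y x) μ)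
    (hφ'_meas : AEStronglyMeasurable (φ' y) μ) (hφ'_le : ∀ z ∈ s, ∀ x, ‖φ' z x‖ ≤ C)
    (hφ' : ∀ z ∈ s, ∀ x, HasFDerivAt (φ · x) (φ' z x) z) :
    HasFDerivAt (fun z => ∫ x, p x * φ z x ∂μ) (∫ x, p x • φ' y x ∂μ) y :=
  hasFDerivAt_integral_of_dominated_of_fderiv_le (bound := fun x => ‖p x‖ * C) hs
    (eventually_of_mem hs fun z hz => hp.aestronglyMeasurable.mul (hφ_meas z hz)) hφ_int
    (hp.aestronglyMeasurable.smul hφ'_meas)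
    (ae_of_all _ fun x z hz => (norm_smul_le _ _).trans
      (mul_le_mul_of_nonneg_left (hφ'_le z hz x) (norm_nonneg _)))
    (hp.norm.mul_const C)
    (ae_of_all _ fun x z hz => (hφ' z hz x).const_mul (p x))

lemma integral_smul_dotProductCLM_sub {d : ℕ} {μ : Measure (Fin d → ℝ)} {f : (Fin d → ℝ) → ℝ}
    (hf : Integrable f μ) (hxf : ∀ k, Integrable (fun x => x k * f x) μ) (y : Fin d → ℝ) :
    ∫ x, f x • dotProductCLM (x - y) ∂μ
      = dotProductCLM fun k => (∫ x, x k * f x ∂μ) - y k * ∫ x, f x ∂μ := by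
  have hk : ∀ k, Integrable (fun x => x k * f x - y k * f x) μ := fun k =>
    (hxf k).sub' (hf.const_mul _)
  have hsum : (fun x => f x • dotProductCLM (x - y))
      = fun x => ∑ k, (x k * f x - y k * f x) • ContinuousLinearMap.proj (R := ℝ) k := by
    ext x v
    simp only [smul_apply, dotProductCLM_apply, smul_eq_mul, Finset.mul_sum, sum_apply,
      ContinuousLinearMap.proj_apply, Pi.sub_apply]
    exact Finset.sum_congr rfl fun k _ => by ring
  rw [hsum, integral_finsetSum _ fun k _ => (hk k).smul_const _]
  simp only [integral_smul_const, integral_sub (hxf _) (hf.const_mul _), integral_const_mul]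
  rfl

lemma hasFDerivAt_sqDist_right {d : ℕ} (x z : Fin d → ℝ) :
    HasFDerivAt (sqDist x) ((-2 : ℝ) • dotProductCLM (x - z)) z := by
  have h : HasFDerivAt (fun w : Fin d → ℝ => ∑ k, (x k - w k) ^ 2)
      (∑ k, (2 * (x k - z k)) • -ContinuousLinearMap.proj (R := ℝ) (φ := fun _ => ℝ) k) z :=
    HasFDerivAt.fun_sum fun k _ => by
      simpa using ((hasFDerivAt_apply (𝕜 := ℝ) k z).const_sub (x k)).pow 2
  refine h.congr_fderiv ?_
  ext v
  simp [Finset.mul_sum, mul_assoc]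

lemma hasFDerivAt_gKer {d : ℕ} (σ : ℝ) (x z : Fin d → ℝ) :
    HasFDerivAt (gKer d σ x) ((gKer d σ x z / σ ^ 2) • dotProductCLM (x - z)) z := by
  set C := (2 * π * σ ^ 2) ^ (-(d : ℝ) / 2)
  have h : HasDerivAt (fun s => C * exp (-s / (2 * σ ^ 2)))
      (C * exp (-sqDist x z / (2 * σ ^ 2)) * (-1 / (2 * σ ^ 2))) (sqDist x z) := by
    refine (((hasDerivAt_id _).neg.div_const _).exp).const_mul C |>.congr_deriv ?_
    ring
  refine h.comp_hasFDerivAt z (hasFDerivAt_sqDist_right x z) |>.congr_fderiv ?_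
  rw [smul_smul]
  congr 1
  simp only [gKer, C]
  ring

lemma gKer_nonneg {d : ℕ} (σ : ℝ) (x z : Fin d → ℝ) : 0 ≤ gKer d σ x z := by
  unfold gKer; positivity

lemma continuous_gKer {d : ℕ} (σ : ℝ) (z : Fin d → ℝ) : Continuous fun x => gKer d σ x z := by
  unfold gKer sqDist; fun_prop

lemma sq_norm_sub_le_sqDist {d : ℕ} (x y : Fin d → ℝ) : ‖x - y‖ ^ 2 ≤ sqDist x y := by
  have h : ‖x - y‖ ≤ √(sqDist x y) := by
    refine (pi_norm_le_iff_of_nonneg (Real.sqrt_nonneg _)).2 fun i => ?_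
    refine Real.abs_le_sqrt ?_
    simpa [sqDist] using Finset.single_le_sum (f := fun k => (x k - y k) ^ 2)
      (fun k _ => sq_nonneg _) (Finset.mem_univ i)
  calc ‖x - y‖ ^ 2 ≤ √(sqDist x y) ^ 2 := by gcongr
    _ = sqDist x y := Real.sq_sqrt (Finset.sum_nonneg fun _ _ => sq_nonneg _)

lemma sq_mul_exp_neg_sq_div_le {a : ℝ} (ha : 0 < a) (t : ℝ) : t ^ 2 * exp (-t ^ 2 / a) ≤ a := by
  have h := add_one_le_exp (t ^ 2 / a)
  rw [neg_div, exp_neg, ← div_eq_mul_inv, div_le_iff₀ (exp_pos _)]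
  have : t ^ 2 = a * (t ^ 2 / a) := by field_simp
  nlinarith [sq_nonneg t]

lemma exists_one_add_norm_sq_mul_gKer_le {d : ℕ} {σ : ℝ} (hσ : σ ≠ 0) (R : ℝ) :
    ∃ C, ∀ x z : Fin d → ℝ, ‖z‖ ≤ R → (1 + ‖x‖) ^ 2 * gKer d σ x z ≤ C := by
  set c := (2 * π * σ ^ 2) ^ (-(d : ℝ) / 2)
  have ha : 0 < 2 * σ ^ 2 := by positivity
  refine ⟨c * (2 * (1 + R) ^ 2 + 2 * (2 * σ ^ 2)), fun x z hz => ?_⟩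
  set t := ‖x - z‖
  set E := exp (-t ^ 2 / (2 * σ ^ 2))
  have hE : exp (-sqDist x z / (2 * σ ^ 2)) ≤ E :=
    exp_le_exp.2 (div_le_div_of_nonneg_right (neg_le_neg (sq_norm_sub_le_sqDist x z)) ha.le)
  have hE1 : E ≤ 1 :=
    exp_le_one_iff.2 (div_nonpos_of_nonpos_of_nonneg (neg_nonpos.2 (sq_nonneg t)) ha.le)
  have htE : t ^ 2 * E ≤ 2 * σ ^ 2 := sq_mul_exp_neg_sq_div_le ha t
  have hx : (1 + ‖x‖) ^ 2 ≤ 2 * (1 + R) ^ 2 + 2 * t ^ 2 := by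
    have : 1 + ‖x‖ ≤ (1 + R) + t := by linarith [norm_le_insert' x z]
    nlinarith [norm_nonneg x, sq_nonneg (1 + R - t)]
  have hc : 0 ≤ c := by positivity
  calc (1 + ‖x‖) ^ 2 * gKer d σ x z ≤ (2 * (1 + R) ^ 2 + 2 * t ^ 2) * (c * E) := by
        unfold gKer; gcongr
    _ = c * (2 * (1 + R) ^ 2 * E + 2 * (t ^ 2 * E)) := by ring
    _ ≤ c * (2 * (1 + R) ^ 2 + 2 * (2 * σ ^ 2)) := by
        refine mul_le_mul_of_nonneg_left ?_ hc
        nlinarith [mul_le_mul_of_nonneg_left hE1 (sq_nonneg (1 + R))]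

section

variable {d : ℕ} {σ : ℝ} {p : (Fin d → ℝ) → ℝ}

lemma integrable_mul_mul_gKer (hσ : σ ≠ 0) (hp : Integrable p) {v : (Fin d → ℝ) → ℝ}
    (hv : AEStronglyMeasurable v) (hv_le : ∀ x, |v x| ≤ (1 + ‖x‖) ^ 2) (z : Fin d → ℝ) :
    Integrable fun x => v x * (p x * gKer d σ x z) := by
  obtain ⟨C, hC⟩ := exists_one_add_norm_sq_mul_gKer_le (d := d) hσ ‖z‖
  have h := hp.mul_bdd (hv.fun_mul (continuous_gKer σ z).aestronglyMeasurable) <|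
    ae_of_all _ fun x => by
      rw [norm_mul, Real.norm_eq_abs, Real.norm_of_nonneg (gKer_nonneg σ x z)]
      exact (mul_le_mul_of_nonneg_right (hv_le x) (gKer_nonneg σ x z)).trans (hC x z le_rfl)
  simpa only [mul_left_comm (p _)] using h

lemma norm_mul_gKer_smul_dotProductCLM_le {w : (Fin d → ℝ) → ℝ}
    (hw_le : ∀ x, |w x| ≤ 1 + ‖x‖) {R : ℝ} (x z : Fin d → ℝ) (hz : ‖z‖ ≤ R) :
    ‖(w x * gKer d σ x z / σ ^ 2) • dotProductCLM (x - z)‖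
      ≤ d * (1 + R) / σ ^ 2 * ((1 + ‖x‖) ^ 2 * gKer d σ x z) := by
  have hg := gKer_nonneg σ x z
  have hxz : ‖x - z‖ ≤ (1 + R) * (1 + ‖x‖) := by
    nlinarith [norm_sub_le x z, norm_nonneg x, norm_nonneg z]
  rw [norm_smul, Real.norm_eq_abs, abs_div, abs_mul, abs_of_nonneg hg,
    abs_of_nonneg (sq_nonneg σ)]
  calc |w x| * gKer d σ x z / σ ^ 2 * ‖dotProductCLM (x - z)‖
      ≤ (1 + ‖x‖) * gKer d σ x z / σ ^ 2 * (d * ((1 + R) * (1 + ‖x‖))) := by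
        gcongr
        · exact hw_le x
        · exact (norm_dotProductCLM_le _).trans (by gcongr)
    _ = _ := by ring

lemma hasFDerivAt_integral_mul_mul_gKer (hσ : σ ≠ 0) (hp : Integrable p)
    {w : (Fin d → ℝ) → ℝ} (hw : AEStronglyMeasurable w) (hw_le : ∀ x, |w x| ≤ 1 + ‖x‖)
    (y : Fin d → ℝ) :
    HasFDerivAt (fun z => ∫ x, w x * (p x * gKer d σ x z))
      ((σ ^ 2)⁻¹ • dotProductCLM fun k => (∫ x, x k * w x * (p x * gKer d σ x y))
        - y k * ∫ x, w x * (p x * gKer d σ x y)) y := by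
  obtain ⟨C, hC⟩ := exists_one_add_norm_sq_mul_gKer_le (d := d) hσ (‖y‖ + 1)
  have hball : ∀ z ∈ Metric.ball y 1, ‖z‖ ≤ ‖y‖ + 1 := fun z hz =>
    (norm_le_insert' z y).trans (by rw [← dist_eq_norm]; linarith [Metric.mem_ball.1 hz])
  have hw_int := integrable_mul_mul_gKer hσ hp hw
    (fun x => (hw_le x).trans (by nlinarith [norm_nonneg x])) y
  have hxw_int : ∀ k, Integrable fun x => x k * (w x * (p x * gKer d σ x y)) := fun k => by
    simpa only [mul_assoc] using integrable_mul_mul_gKer hσ hp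
      ((continuous_apply k).aestronglyMeasurable.fun_mul hw) (fun x => by
        rw [abs_mul, sq]
        exact mul_le_mul ((norm_le_pi_norm x k).trans (by linarith)) (hw_le x) (abs_nonneg _)
          (by positivity)) y
  have h := hasFDerivAt_integral_mul_of_fderiv_le hp (Metric.ball_mem_nhds y one_pos)
    (φ := fun z x => w x * gKer d σ x z)
    (φ' := fun z x => (w x * gKer d σ x z / σ ^ 2) • dotProductCLM (x - z))
    (fun z _ => hw.fun_mul (continuous_gKer σ z).aestronglyMeasurable)
    (by simpa only [mul_left_comm (p _)] using hw_int)
    (by have := (continuous_gKer σ y).aestronglyMeasurable (μ := volume); fun_prop)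
    (fun z hz x => (norm_mul_gKer_smul_dotProductCLM_le hw_le x z (hball z hz)).trans
      (mul_le_mul_of_nonneg_left (hC x z (hball z hz)) (by positivity)))
    (fun z _ x => by
      simpa only [smul_smul, mul_div_assoc] using (hasFDerivAt_gKer σ x z).const_mul (w x))
  simp only [mul_left_comm (p _)] at h
  refine h.congr_fderiv ?_
  calc ∫ x, p x • (w x * gKer d σ x y / σ ^ 2) • dotProductCLM (x - y)
      = ∫ x, (σ ^ 2)⁻¹ • (w x * (p x * gKer d σ x y)) • dotProductCLM (x - y) :=
        integral_congr_ae <| ae_of_all _ fun x => by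
          simp only [smul_smul]
          ring_nf
    _ = _ := by
        rw [integral_smul, integral_smul_dotProductCLM_sub hw_int hxw_int]
        simp only [mul_assoc]

lemma hasFDerivAt_integral_mul_gKer (hσ : σ ≠ 0) (hp : Integrable p) (y : Fin d → ℝ) :
    HasFDerivAt (fun z => ∫ x, p x * gKer d σ x z)
      ((σ ^ 2)⁻¹ • dotProductCLM fun k => (∫ x, x k * (p x * gKer d σ x y))
        - y k * ∫ x, p x * gKer d σ x y) y := by
  simpa only [one_mul, mul_one] using hasFDerivAt_integral_mul_mul_gKer hσ hp
    (w := fun _ => 1) aestronglyMeasurable_const (fun x => by simp [norm_nonneg]) y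

lemma hasFDerivAt_integral_coord_mul_gKer (hσ : σ ≠ 0) (hp : Integrable p) (j : Fin d)
    (y : Fin d → ℝ) :
    HasFDerivAt (fun z => ∫ x, x j * (p x * gKer d σ x z))
      ((σ ^ 2)⁻¹ • dotProductCLM fun k => (∫ x, x k * x j * (p x * gKer d σ x y))
        - y k * ∫ x, x j * (p x * gKer d σ x y)) y :=
  hasFDerivAt_integral_mul_mul_gKer hσ hp (continuous_apply j).aestronglyMeasurable
    (fun x => (norm_le_pi_norm x j).trans (by linarith)) y

/-- Tweedie's formula. -/
lemma hasFDerivAt_log_integral_mul_gKer (hσ : σ ≠ 0) (hp : Integrable p) {y : Fin d → ℝ}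
    (hy : 0 < ∫ x, p x * gKer d σ x y) :
    HasFDerivAt (fun z => log (∫ x, p x * gKer d σ x z))
      ((σ ^ 2)⁻¹ • dotProductCLM fun k =>
        (∫ x, x k * (p x * gKer d σ x y)) / (∫ x, p x * gKer d σ x y) - y k) y := by
  refine ((hasFDerivAt_integral_mul_gKer hσ hp y).log hy.ne').congr_fderiv ?_
  ext v
  simp only [smul_apply, dotProductCLM_apply, smul_eq_mul, Finset.mul_sum]
  refine Finset.sum_congr rfl fun k _ => ?_
  field_simp

end

theorem stmt3_general (d : ℕ) (σ : ℝ) (hσ : 0 < σ) (p : (Fin d → ℝ) → ℝ)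
    (hpi : Integrable p)
    (hpos : ∀ y, 0 < ∫ x, p x * gKer d σ x y) :
    ∀ y : Fin d → ℝ,
      hess' (fun z => Real.log (∫ x, p x * gKer d σ x z)) y
        = -((1 / σ ^ 2) • (1 : Matrix (Fin d) (Fin d) ℝ))
            + (1 / σ ^ 4) • postCov d σ p y := by
  intro y
  ext i j
  have hscore : (fun z => fderiv ℝ (fun z => log (∫ x, p x * gKer d σ x z)) z (Pi.single j 1))
      = fun z => (σ ^ 2)⁻¹ *
        ((∫ x, x j * (p x * gKer d σ x z)) * (∫ x, p x * gKer d σ x z)⁻¹ - z j) := by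
    ext z
    rw [(hasFDerivAt_log_integral_mul_gKer hσ.ne' hpi (hpos z)).fderiv, smul_apply,
      dotProductCLM_single, smul_eq_mul, div_eq_mul_inv]
  have h := (((hasFDerivAt_integral_coord_mul_gKer hσ.ne' hpi j y).fun_mul
    ((hasDerivAt_inv (hpos y).ne').comp_hasFDerivAt y
      (hasFDerivAt_integral_mul_gKer hσ.ne' hpi y))).fun_sub
    (hasFDerivAt_apply (𝕜 := ℝ) j y)).const_mul (σ ^ 2)⁻¹
  simp only [Function.comp_apply] at h
  simp only [hess', Matrix.of_apply, hscore, h.fderiv, smul_apply, sub_apply, add_apply,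
    dotProductCLM_single, ContinuousLinearMap.proj_apply, smul_eq_mul, Pi.single_apply,
    @eq_comm _ j i, Matrix.add_apply, Matrix.neg_apply, Matrix.smul_apply, Matrix.one_apply,
    postCov]
  have hF := (hpos y).ne'
  split_ifs <;> field_simp <;> ring

/-- If `X` has density `p` and `Y = X + N`, `N ~ N(0, σ²I)`, then
`∇² log p_Y(y) = −(1/σ²) I + (1/σ⁴) cov(X | Y = y)` for every `y`. -/
theorem stmt3 (d : ℕ) (σ : ℝ) (hσ : 0 < σ) (p : (Fin d → ℝ) → ℝ)
    (hp0 : ∀ x, 0 ≤ p x) (hpi : Integrable p) (hp1 : ∫ x, p x = 1)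
    (hpos : ∀ y, 0 < ∫ x, p x * gKer d σ x y)
    (hmom2 : ∀ y i j, Integrable fun x => x i * x j * (p x * gKer d σ x y)) :
    ∀ y : Fin d → ℝ,
      hess' (fun z => Real.log (∫ x, p x * gKer d σ x z)) y
        = -((1 / σ ^ 2) • (1 : Matrix (Fin d) (Fin d) ℝ))
            + (1 / σ ^ 4) • postCov d σ p y :=
  stmt3_general d σ hσ p hpi hpos
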